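/- Define r_g ∈ ℂ[ω,β,γ,δ] by r₀ = 1, r₁ = ω + δ/2 − 1, r₂ = ((ω+δ/2)² − β)/2 + ω − δ/2 − 1/2, and for g ≥ 3 by g·r_g = (ω + δ/2 + (−1)^g(2g−1))·r_{g−1} + (1−g)(β + (−1)^g·2δ − 2)·r_{g−2} − (γ/2)·r_{g−3}. Then for every g ≥ 1, γ^g lies in the ideal (r_g, r_{g+1}, r_{g+2}) of ℂ[ω,β,γ,δ]. -/
import Mathlib


/-!
STATEMENT 16: Define `r_g ∈ ℂ[ω,β,γ,δ]` by `r₀ = 1`, `r₁ = ω + δ/2 − 1`,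
`r₂ = ((ω+δ/2)² − β)/2 + ω − δ/2 − 1/2`, and for `g ≥ 3` by
`g·r_g = (ω + δ/2 + (−1)^g(2g−1))·r_{g−1} + (1−g)(β + (−1)^g·2δ − 2)·r_{g−2}
          − (γ/2)·r_{g−3}`.
Then for every `g ≥ 1`, `γ^g ∈ (r_g, r_{g+1}, r_{g+2})` as an ideal of `ℂ[ω,β,γ,δ]`.
Variables: `ω = X 0`, `β = X 1`, `γ = X 2`, `δ = X 3`.
-/

open MvPolynomial

theorem stmt16 (r : ℕ → MvPolynomial (Fin 4) ℂ)
    (h0 : r 0 = 1)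
    (h1 : r 1 = X 0 + (2:ℂ)⁻¹ • X 3 - 1)
    (h2 : r 2 = (2:ℂ)⁻¹ • ((X 0 + (2:ℂ)⁻¹ • X 3) ^ 2 - X 1)
          + X 0 - (2:ℂ)⁻¹ • X 3 - C ((2:ℂ)⁻¹))
    (hrec : ∀ g : ℕ, 3 ≤ g →
      (g : ℂ) • r g
        = (X 0 + (2:ℂ)⁻¹ • X 3 + C ((-1 : ℂ) ^ g * (2 * (g : ℂ) - 1))) * r (g - 1)
          + C (1 - (g : ℂ)) *
              ((X 1 + C ((-1 : ℂ) ^ g * 2) * X 3 - 2) * r (g - 2))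
          - (2:ℂ)⁻¹ • (X 2 * r (g - 3))) :
    ∀ g : ℕ, 1 ≤ g →
      (X 2 : MvPolynomial (Fin 4) ℂ) ^ g ∈ Ideal.span {r g, r (g + 1), r (g + 2)} := by
  have key : ∀ g : ℕ, (X 2 : MvPolynomial (Fin 4) ℂ) * r g ∈
      Ideal.span {r (g + 1), r (g + 2), r (g + 3)} := by
    intro g
    have h := hrec (g + 3) (by omega)
    have e1 : g + 3 - 1 = g + 2 := by omega
    have e2 : g + 3 - 2 = g + 1 := by omega
    have e3 : g + 3 - 3 = g := by omega
    rw [e1, e2, e3] at h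
    simp only [smul_eq_C_mul] at h
    have m1 : r (g + 1) ∈ Ideal.span {r (g + 1), r (g + 2), r (g + 3)} :=
      Ideal.subset_span (by simp)
    have m2 : r (g + 2) ∈ Ideal.span {r (g + 1), r (g + 2), r (g + 3)} :=
      Ideal.subset_span (by simp)
    have m3 : r (g + 3) ∈ Ideal.span {r (g + 1), r (g + 2), r (g + 3)} :=
      Ideal.subset_span (by simp)
    have hm : C (2:ℂ)⁻¹ * (X 2 * r g) ∈ Ideal.span {r (g + 1), r (g + 2), r (g + 3)} := by
      have e : C (2:ℂ)⁻¹ * ((X 2 : MvPolynomial (Fin 4) ℂ) * r g) =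
          (X 0 + C (2:ℂ)⁻¹ * X 3 + C ((-1 : ℂ) ^ (g + 3) * (2 * ((g + 3 : ℕ):ℂ) - 1))) * r (g + 2)
          + (C (1 - ((g + 3 : ℕ):ℂ)) * (X 1 + C ((-1 : ℂ) ^ (g + 3) * 2) * X 3 - 2)) * r (g + 1)
          - C (((g + 3 : ℕ):ℂ)) * r (g + 3) := by
        linear_combination h
      rw [e]
      exact sub_mem (add_mem (Ideal.mul_mem_left _ _ m2) (Ideal.mul_mem_left _ _ m1))
        (Ideal.mul_mem_left _ _ m3)
    have e2 : (X 2 : MvPolynomial (Fin 4) ℂ) * r g = C 2 * (C (2:ℂ)⁻¹ * (X 2 * r g)) := by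
      rw [← mul_assoc, ← C_mul]; norm_num
    rw [e2]
    exact Ideal.mul_mem_left _ _ hm
  intro g hg
  induction g, hg using Nat.le_induction with
  | base =>
    have h := key 0
    rw [h0, mul_one] at h
    simpa using h
  | succ g hg ih =>
    have hstep : ∀ x ∈ Ideal.span {r g, r (g + 1), r (g + 2)},
        (X 2 : MvPolynomial (Fin 4) ℂ) * x ∈
          Ideal.span {r (g + 1), r (g + 2), r (g + 3)} := by
      intro x hx
      refine Submodule.span_induction ?_ ?_ ?_ ?_ hx
      · intro p hp
        rcases hp with h | h | h
        · subst h; exact key g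
        · subst h
          exact Ideal.mul_mem_left _ _ (Ideal.subset_span (by simp))
        · simp only [Set.mem_singleton_iff] at h
          subst h
          exact Ideal.mul_mem_left _ _ (Ideal.subset_span (by simp))
      · simp
      · intro a b _ _ ha hb
        rw [mul_add]; exact add_mem ha hb
      · intro p a _ ha
        rw [smul_eq_mul, mul_left_comm]
        exact Ideal.mul_mem_left _ _ ha
    have : (X 2 : MvPolynomial (Fin 4) ℂ) ^ (g + 1) = X 2 * X 2 ^ g := by ring
    rw [this]
    have h := hstep _ ih
    have e2 : g + 1 + 1 = g + 2 := rfl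
    have e3 : g + 1 + 2 = g + 3 := rfl
    rw [e2, e3]
    exact h
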